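/- arXiv:0805.0082 — 4 statements merged into one kernel-verified Lean document; each statement's English description precedes it below -/
import Mathlib

section
/- Let n ≥ 3 and let S be the set of triples (k, ℓ, m) of integers with ℓ ≥ 0, m ≥ 0, ℓ + 1 ≤ k ≤ n−1, m + 1 ≤ k, and ℓ + m ≤ n − 2. Then |S| > C(n,3) = n(n−1)(n−2)/6. -/
/-!
Label `{1, …, n}` by `0, …, n - 1`, so that 3-subsets become triples `a > b > c` in `range n`.
The map sending such a triple to `(a, b, c)` if `b + c + 2 ≤ n` and to `(n-1-c, n-1-a, n-1-b)`
otherwise lands in `S`; the first branch produces triples with `ℓ > m` and the second with `ℓ < m`,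
so it is injective, and it misses `(1, 0, 0) ∈ S`.
-/

open Finset

namespace Nat

theorem sum_range_choose_eq_choose_succ (n k : ℕ) :
    ∑ i ∈ range n, i.choose k = n.choose (k + 1) := by
  induction n with
  | zero => simp
  | succ n ih => rw [sum_range_succ, ih, choose_succ_succ', add_comm]

theorem choose_three_right (n : ℕ) : n.choose 3 = n * (n - 1) * (n - 2) / 6 := by
  rw [choose_eq_descFactorial_div_factorial]
  simp only [descFactorial, factorial, tsub_zero, mul_one, succ_eq_add_one, reduceAdd, zero_add,
    reduceMul]
  ring_nf

end Nat

-- Sigma-typed so that the cardinality unfolds to a nested sum.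
def decreasingTriples (n : ℕ) : Finset ((_ : ℕ) × (_ : ℕ) × ℕ) :=
  (range n).sigma fun a => (range a).sigma fun b => range b

theorem mem_decreasingTriples {n : ℕ} {x : (_ : ℕ) × (_ : ℕ) × ℕ} :
    x ∈ decreasingTriples n ↔ x.2.2 < x.2.1 ∧ x.2.1 < x.1 ∧ x.1 < n := by
  simp only [decreasingTriples, mem_sigma, mem_range]
  tauto

theorem card_decreasingTriples (n : ℕ) : #(decreasingTriples n) = n.choose 3 := by
  have sum_range_eq_choose_two (a : ℕ) : ∑ b ∈ range a, b = a.choose 2 := by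
    simpa using Nat.sum_range_choose_eq_choose_succ a 1
  simp only [decreasingTriples, card_sigma, card_range, sum_range_eq_choose_two]
  exact Nat.sum_range_choose_eq_choose_succ n 2

def criticalTriples (n : ℕ) : Finset (ℕ × ℕ × ℕ) :=
  (range n ×ˢ range n ×ˢ range n).filter fun p =>
    p.2.1 + 1 ≤ p.1 ∧ p.1 ≤ n - 1 ∧ p.2.2 + 1 ≤ p.1 ∧ p.2.1 + p.2.2 ≤ n - 2

theorem mem_criticalTriples {n : ℕ} {p : ℕ × ℕ × ℕ} :
    p ∈ criticalTriples n ↔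
      p.2.1 + 1 ≤ p.1 ∧ p.1 ≤ n - 1 ∧ p.2.2 + 1 ≤ p.1 ∧ p.2.1 + p.2.2 ≤ n - 2 := by
  simp only [criticalTriples, mem_filter, mem_product, mem_range]
  omega

def tripleToCritical (n : ℕ) (x : (_ : ℕ) × (_ : ℕ) × ℕ) : ℕ × ℕ × ℕ :=
  if x.2.1 + x.2.2 + 2 ≤ n then (x.1, x.2.1, x.2.2)
  else (n - 1 - x.2.2, n - 1 - x.1, n - 1 - x.2.1)

theorem mapsTo_tripleToCritical (n : ℕ) :
    Set.MapsTo (tripleToCritical n) (decreasingTriples n)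
      ((criticalTriples n).erase (1, 0, 0)) := by
  rintro ⟨a, b, c⟩ hx
  rw [mem_coe, mem_decreasingTriples] at hx
  dsimp only at hx
  simp only [tripleToCritical, mem_coe, mem_erase, mem_criticalTriples]
  split_ifs <;> simp only [ne_eq, Prod.mk.injEq] <;> omega

theorem injOn_tripleToCritical (n : ℕ) : Set.InjOn (tripleToCritical n) (decreasingTriples n) := by
  rintro ⟨a, b, c⟩ hx ⟨a', b', c'⟩ hy h
  rw [mem_coe, mem_decreasingTriples] at hx hy
  dsimp only at hx hy
  simp only [tripleToCritical] at h
  obtain ⟨rfl, rfl, rfl⟩ : a = a' ∧ b = b' ∧ c = c' := by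
    split_ifs at h <;> simp only [Prod.mk.injEq] at h <;> omega
  rfl

theorem choose_three_lt_card_criticalTriples {n : ℕ} (hn : 2 ≤ n) :
    n.choose 3 < #(criticalTriples n) :=
  calc n.choose 3 = #(decreasingTriples n) := (card_decreasingTriples n).symm
    _ ≤ #((criticalTriples n).erase (1, 0, 0)) :=
      card_le_card_of_injOn _ (mapsTo_tripleToCritical n) (injOn_tripleToCritical n)
    _ < #(criticalTriples n) :=
      card_erase_lt_of_mem (mem_criticalTriples.2 (by dsimp only; omega))

/-- For `n ≥ 3`, the set `S` of triples `(k, ℓ, m)` of nonnegative integers with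
`ℓ + 1 ≤ k ≤ n − 1`, `m + 1 ≤ k` and `ℓ + m ≤ n − 2` has cardinality strictly greater
than `C(n,3) = n(n−1)(n−2)/6`. -/
theorem stmt7 (n : ℕ) (hn : 3 ≤ n) :
    Nat.card {p : ℕ × ℕ × ℕ //
        p.2.1 + 1 ≤ p.1 ∧ p.1 ≤ n - 1 ∧ p.2.2 + 1 ≤ p.1 ∧ p.2.1 + p.2.2 ≤ n - 2}
      > n.choose 3 ∧
    n.choose 3 = n * (n - 1) * (n - 2) / 6 := by
  refine ⟨?_, Nat.choose_three_right n⟩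
  rw [← Nat.card_congr (Equiv.subtypeEquivRight fun p => mem_criticalTriples),
    Nat.card_eq_finsetCard]
  exact choose_three_lt_card_criticalTriples (by omega)
end

section
/- The map f defined on 3-element subsets {a, b, c} ⊆ {1, …, n} with a > b > c by f({a,b,c}) = (a−1, b−1, c−1) if b + c ≤ n and f({a,b,c}) = (n−c, n−a, n−b) otherwise, is injective, takes values in the set S = {(k,ℓ,m) : ℓ,m ≥ 0, ℓ+1 ≤ k ≤ n−1, m+1 ≤ k, ℓ+m ≤ n−2}, and (1,0,0) ∈ S is not in the image of f. -/
/-!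
The first branch keeps the order `ℓ > m` of the last two coordinates and the second branch
reverses it, so the branch is read off the image; on each branch the map is affine, hence
injective. Both branches land in `S` by direct inequalities, and `(1, 0, 0)` would force
`b = 1 ≤ c` in the first branch and `a = b = n` in the second.
-/

def foldTriple (n a b c : ℕ) : ℕ × ℕ × ℕ :=
  if b + c ≤ n then (a - 1, b - 1, c - 1) else (n - c, n - a, n - b)

def IsAdmissibleTriple (n : ℕ) (t : ℕ × ℕ × ℕ) : Prop :=
  t.2.1 + 1 ≤ t.1 ∧ t.1 ≤ n - 1 ∧ t.2.2 + 1 ≤ t.1 ∧ t.2.1 + t.2.2 ≤ n - 2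

section FoldTriple

variable {n a b c : ℕ}

theorem isAdmissibleTriple_one_zero_zero (hn : 2 ≤ n) : IsAdmissibleTriple n (1, 0, 0) := by
  simp only [IsAdmissibleTriple]
  omega

theorem isAdmissibleTriple_foldTriple (hcb : c < b) (hba : b < a) (han : a ≤ n) :
    IsAdmissibleTriple n (foldTriple n a b c) := by
  unfold IsAdmissibleTriple foldTriple
  split_ifs <;> dsimp only <;> omega

theorem foldTriple_lt_iff (hc : 1 ≤ c) (hcb : c < b) (hba : b < a) (han : a ≤ n) :
    (foldTriple n a b c).2.2 < (foldTriple n a b c).2.1 ↔ b + c ≤ n := by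
  unfold foldTriple
  split_ifs <;> dsimp only <;> omega

theorem foldTriple_injOn {a' b' c' : ℕ} (hc : 1 ≤ c) (hcb : c < b) (hba : b < a) (han : a ≤ n)
    (hc' : 1 ≤ c') (hcb' : c' < b') (hba' : b' < a') (han' : a' ≤ n)
    (h : foldTriple n a b c = foldTriple n a' b' c') : (a, b, c) = (a', b', c') := by
  have hbranch : b + c ≤ n ↔ b' + c' ≤ n := by
    rw [← foldTriple_lt_iff hc hcb hba han, ← foldTriple_lt_iff hc' hcb' hba' han', h]
  unfold foldTriple at h
  split_ifs at h <;> simp only [Prod.mk.injEq] at h ⊢ <;> omega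

theorem foldTriple_ne_one_zero_zero (hc : 1 ≤ c) (hcb : c < b) (hba : b < a) (han : a ≤ n) :
    foldTriple n a b c ≠ (1, 0, 0) := by
  unfold foldTriple
  split_ifs <;> simp only [Ne, Prod.mk.injEq, not_and] <;> omega

end FoldTriple

/-- The map `f` on 3-element subsets `{a > b > c}` of `{1,…,n}` given by
`f(a,b,c) = (a−1, b−1, c−1)` if `b + c ≤ n` and `(n−c, n−a, n−b)` otherwise,
takes values in `S = {(k,ℓ,m) : ℓ+1 ≤ k ≤ n−1, m+1 ≤ k, ℓ+m ≤ n−2}`, is injective,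
and misses the element `(1,0,0)` of `S`. -/
theorem stmt8 (n : ℕ) (hn : 3 ≤ n) (f : ℕ × ℕ × ℕ → ℕ × ℕ × ℕ)
    (hf : ∀ a b c : ℕ,
      f (a, b, c) = if b + c ≤ n then (a - 1, b - 1, c - 1) else (n - c, n - a, n - b)) :
    (∀ a b c : ℕ, 1 ≤ c → c < b → b < a → a ≤ n →
      (f (a, b, c)).2.1 + 1 ≤ (f (a, b, c)).1 ∧ (f (a, b, c)).1 ≤ n - 1 ∧
      (f (a, b, c)).2.2 + 1 ≤ (f (a, b, c)).1 ∧ (f (a, b, c)).2.1 + (f (a, b, c)).2.2 ≤ n - 2) ∧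
    (∀ a b c a' b' c' : ℕ, 1 ≤ c → c < b → b < a → a ≤ n →
      1 ≤ c' → c' < b' → b' < a' → a' ≤ n →
      f (a, b, c) = f (a', b', c') → (a, b, c) = (a', b', c')) ∧
    (((1 : ℕ), (0 : ℕ), (0 : ℕ)).2.1 + 1 ≤ ((1 : ℕ), (0 : ℕ), (0 : ℕ)).1 ∧
      ((1 : ℕ), (0 : ℕ), (0 : ℕ)).1 ≤ n - 1 ∧
      ((1 : ℕ), (0 : ℕ), (0 : ℕ)).2.2 + 1 ≤ ((1 : ℕ), (0 : ℕ), (0 : ℕ)).1 ∧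
      ((1 : ℕ), (0 : ℕ), (0 : ℕ)).2.1 + ((1 : ℕ), (0 : ℕ), (0 : ℕ)).2.2 ≤ n - 2) ∧
    (∀ a b c : ℕ, 1 ≤ c → c < b → b < a → a ≤ n → f (a, b, c) ≠ (1, 0, 0)) := by
  obtain rfl : f = fun t => foldTriple n t.1 t.2.1 t.2.2 := funext fun ⟨a, b, c⟩ => hf a b c
  exact ⟨fun _ _ _ _ hcb hba han => isAdmissibleTriple_foldTriple hcb hba han,
    fun _ _ _ _ _ _ hc hcb hba han hc' hcb' hba' han' =>
      foldTriple_injOn hc hcb hba han hc' hcb' hba' han',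
    isAdmissibleTriple_one_zero_zero (by omega),
    fun _ _ _ hc hcb hba han => foldTriple_ne_one_zero_zero hc hcb hba han⟩
end

section
/- Let M be an m × k integer matrix each of whose rows is either (i) the zero row, (ii) a row all of whose entries are zero except one entry equal to 1 and one entry equal to −1, or (iii) a row containing an entry equal to 1 in some column j such that every other row of M has entry 0 in column j. Then the cokernel ℤ^k / (row space of M) is a torsion-free abelian group. -/
/-!
Torsion-freeness of `M ⧸ N` amounts to `N` being saturated: `c • v ∈ N` with `c ≠ 0` forces
`v ∈ N`. The rows of type (ii) are edges `eⱼ - eⱼ'` of a graph on the columns, and they span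
exactly the vectors whose coordinate sums over every connected component vanish: a kernel, hence
saturated. A row of type (iii) is the only row that is nonzero in its pivot column, so in
`c • v = d + ∑ tᵢ Mᵢ` (with `d` spanned by the other rows) the coefficient `tᵢ` is
`c * v (pivot i)`; subtracting `∑ v (pivot i) • Mᵢ` from `v` reduces to the saturated part.
-/

open Finset Relation Submodule

namespace Submodule

variable {R M : Type*} [Ring R] [AddCommGroup M] [Module R M]

def IsSaturated (N : Submodule R M) : Prop :=
  ∀ ⦃c : R⦄ ⦃v : M⦄, c ≠ 0 → c • v ∈ N → v ∈ N

theorem isSaturated_ker [IsDomain R] {M' : Type*} [AddCommGroup M'] [Module R M']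
    [Module.IsTorsionFree R M'] (f : M →ₗ[R] M') : (LinearMap.ker f).IsSaturated := by
  intro c v hc hcv
  rw [LinearMap.mem_ker, map_smul] at hcv
  exact (smul_eq_zero_iff_right hc).mp hcv

theorem IsSaturated.isTorsionFree_quotient [Nontrivial R] {N : Submodule R M}
    (hN : N.IsSaturated) : Module.IsTorsionFree R (M ⧸ N) := by
  refine .of_smul_eq_zero fun c x hcx => ?_
  obtain ⟨v, rfl⟩ := Quotient.mk_surjective N x
  rw [← Quotient.mk_smul, Quotient.mk_eq_zero] at hcx
  rw [Quotient.mk_eq_zero]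
  exact or_iff_not_imp_left.mpr fun hc => hN hc hcx

theorem IsSaturated.sup_span_range_of_pivots {R ι α : Type*} [CommRing R] [Fintype α]
    {D : Submodule R (ι → R)} (hD : D.IsSaturated) (u : α → ι → R) (p : α → ι)
    (hu_self : ∀ a, u a (p a) = 1) (hu_ne : ∀ a b, b ≠ a → u b (p a) = 0)
    (hD_pivot : ∀ a, ∀ d ∈ D, d (p a) = 0) :
    (D ⊔ span R (Set.range u)).IsSaturated := by
  intro c v hc hcv
  obtain ⟨d, hd, y, hy, hdy⟩ := mem_sup.mp hcv
  obtain ⟨t, rfl⟩ := (mem_span_range_iff_exists_fun R).mp hy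
  have coeff (a : α) : t a = c * v (p a) := by
    have := congrFun hdy (p a)
    rw [Pi.add_apply, Finset.sum_apply,
      Finset.sum_eq_single a (fun b _ hb => by simp [hu_ne a b hb]) (by simp)] at this
    simpa [hD_pivot a d hd, hu_self] using this
  set w := v - ∑ a, v (p a) • u a
  have hw : c • w = d := by
    simp only [w, smul_sub, ← hdy, Finset.smul_sum, smul_smul, ← coeff, add_sub_cancel_right]
  have hv : v = w + ∑ a, v (p a) • u a := (sub_add_cancel _ _).symm
  rw [hv]
  exact add_mem (mem_sup_left (hD hc (hw ▸ hd)))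
    (mem_sup_right (sum_mem fun a _ => smul_mem _ _ (subset_span ⟨a, rfl⟩)))

end Submodule

section ClassSums

variable {R ι : Type*} [Ring R] (r : ι → ι → Prop)

def singleSubSingle [DecidableEq ι] : Set (ι → R) :=
  {y | ∃ i j, r i j ∧ Pi.single i 1 - Pi.single j 1 = y}

variable (R) in
open Classical in
noncomputable def classSums [Fintype ι] : (ι → R) →ₗ[R] (ι → R) :=
  LinearMap.pi fun j => ∑ i with EqvGen r i j, LinearMap.proj i

variable {r}

open Classical in
theorem classSums_apply [Fintype ι] (x : ι → R) (j : ι) :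
    classSums R r x j = ∑ i with EqvGen r i j, x i := by
  simp [classSums]

variable [DecidableEq ι]

theorem single_sub_single_mem_span_of_eqvGen {i j : ι} (h : EqvGen r i j) :
    Pi.single i 1 - Pi.single j 1 ∈ span R (singleSubSingle (R := R) r) := by
  induction h with
  | rel a b hab => exact subset_span ⟨a, b, hab, rfl⟩
  | refl a => simp
  | symm a b _ ih => simpa using neg_mem ih
  | trans a b c _ _ ih₁ ih₂ => simpa using add_mem ih₁ ih₂

variable [Fintype ι]

theorem span_singleSubSingle_le_ker_classSums :
    span R (singleSubSingle r) ≤ LinearMap.ker (classSums R r) := by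
  classical
  refine span_le.mpr ?_
  rintro _ ⟨a, b, hab, rfl⟩
  have hclass (j : ι) : EqvGen r a j ↔ EqvGen r b j :=
    ⟨(EqvGen.symm _ _ (.rel _ _ hab)).trans _ _ _, (EqvGen.rel _ _ hab).trans _ _ _⟩
  ext j
  simp [classSums_apply, Finset.sum_sub_distrib, Pi.single_apply, hclass]

/-- Writing `x = ∑ xᵢ • (eᵢ - e_{rep i}) + ∑ xᵢ • e_{rep i}` for a choice `rep` of class
representatives, the second sum collects the class sums of `x`. -/
theorem ker_classSums_le_span_singleSubSingle :
    LinearMap.ker (classSums R r) ≤ span R (singleSubSingle r) := by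
  classical
  intro x hx
  let rep (i : ι) : ι := (Quotient.mk (EqvGen.setoid r) i).out
  have rep_eq_iff (i j : ι) : rep j = rep i ↔ EqvGen r i j := by
    rw [eq_comm]
    exact Quotient.out_inj.trans Quotient.eq
  have rel_rep (i : ι) : EqvGen r i (rep i) :=
    EqvGen.symm _ _ (Quotient.mk_out (s := EqvGen.setoid r) i)
  have sum_rep : ∑ i, x i • Pi.single (rep i) (1 : R) = 0 := by
    ext l
    by_cases hl : ∃ j, rep j = l
    · obtain ⟨j, rfl⟩ := hl
      simpa [Finset.sum_apply, Pi.single_apply, rep_eq_iff, Finset.sum_filter, classSums_apply]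
        using congrFun hx j
    · push Not at hl
      simp [Finset.sum_apply, Ne.symm (hl _)]
  have hx_eq : x = ∑ i, x i • (Pi.single i 1 - Pi.single (rep i) 1) := by
    simp only [smul_sub, Finset.sum_sub_distrib, sum_rep, sub_zero]
    exact pi_eq_sum_univ' x
  rw [hx_eq]
  exact sum_mem fun i _ => smul_mem _ _ (single_sub_single_mem_span_of_eqvGen (rel_rep i))

theorem span_singleSubSingle_eq_ker_classSums :
    span R (singleSubSingle r) = LinearMap.ker (classSums R r) :=
  span_singleSubSingle_le_ker_classSums.antisymm ker_classSums_le_span_singleSubSingle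

variable (r) in
theorem isSaturated_span_singleSubSingle [IsDomain R] :
    (span R (singleSubSingle (R := R) r)).IsSaturated := by
  rw [span_singleSubSingle_eq_ker_classSums]
  exact isSaturated_ker _

end ClassSums
section PivotRows

variable {R ι α : Type*} [Ring R] (M : α → ι → R)

def HasPivot (i : α) : Prop :=
  ∃ j, M i j = 1 ∧ ∀ i', i' ≠ i → M i' j = 0

variable {M} in
noncomputable def HasPivot.col {i : α} (h : HasPivot M i) : ι :=
  h.choose

variable {M} in
theorem HasPivot.apply_col {i : α} (h : HasPivot M i) : M i h.col = 1 :=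
  h.choose_spec.1

variable {M} in
theorem HasPivot.apply_col_of_ne {i i' : α} (h : HasPivot M i) (hi' : i' ≠ i) :
    M i' h.col = 0 :=
  h.choose_spec.2 i' hi'

variable [DecidableEq ι]

theorem eq_single_sub_single {y : ι → R} {j j' : ι} (hne : j ≠ j') (hj : y j = 1)
    (hj' : y j' = -1) (hzero : ∀ l, l ≠ j → l ≠ j' → y l = 0) :
    y = Pi.single j 1 - Pi.single j' 1 := by
  ext l
  by_cases hl : l = j
  · subst hl; simp [hne, hj]
  by_cases hl' : l = j'
  · subst hl'; simp [hl, hj']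
  · simp [hl, hl', hzero l hl hl']

def differenceRel (j j' : ι) : Prop :=
  ∃ i, ¬ HasPivot M i ∧ M i = Pi.single j 1 - Pi.single j' 1

theorem span_range_eq_sup
    (hrows : ∀ i, M i = 0 ∨ (∃ j j', M i = Pi.single j 1 - Pi.single j' 1) ∨ HasPivot M i) :
    span R (Set.range M) = span R (singleSubSingle (differenceRel M)) ⊔
      span R (Set.range fun a : {i // HasPivot M i} => M a) := by
  refine le_antisymm (span_le.mpr ?_) (sup_le (span_le.mpr ?_) (span_le.mpr ?_))
  · rintro _ ⟨i, rfl⟩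
    by_cases hi : HasPivot M i
    · exact mem_sup_right (subset_span ⟨⟨i, hi⟩, rfl⟩)
    rcases hrows i with h0 | ⟨j, j', hMi⟩ | h3
    · simp [h0]
    · exact mem_sup_left (subset_span ⟨j, j', ⟨i, hi, hMi⟩, hMi.symm⟩)
    · exact absurd h3 hi
  · rintro _ ⟨j, j', ⟨i, -, hMi⟩, rfl⟩
    exact hMi ▸ subset_span ⟨i, rfl⟩
  · rintro _ ⟨a, rfl⟩
    exact subset_span ⟨a, rfl⟩

theorem apply_col_eq_zero_of_mem_span {i : α} (hi : HasPivot M i) {d : ι → R}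
    (hd : d ∈ span R (singleSubSingle (differenceRel M))) : d hi.col = 0 := by
  suffices span R (singleSubSingle (differenceRel M)) ≤ LinearMap.ker (LinearMap.proj hi.col) from
    this hd
  refine span_le.mpr ?_
  rintro _ ⟨j, j', ⟨i', hi', hMi'⟩, rfl⟩
  rw [SetLike.mem_coe, LinearMap.mem_ker, LinearMap.proj_apply, ← hMi']
  exact hi.apply_col_of_ne fun h => hi' (h ▸ hi)

end PivotRows

/-- If every row of an integer matrix `M` is either zero, or has exactly two nonzero
entries equal to `1` and `−1`, or contains an entry `1` in a column where every other row
vanishes, then the cokernel `ℤ^k / (row space of M)` is torsion-free. -/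
theorem stmt9 (m k : ℕ) (M : Fin m → Fin k → ℤ)
    (hrows : ∀ i : Fin m,
      (M i = 0) ∨
      (∃ j j' : Fin k, j ≠ j' ∧ M i j = 1 ∧ M i j' = -1 ∧
        ∀ l : Fin k, l ≠ j → l ≠ j' → M i l = 0) ∨
      (∃ j : Fin k, M i j = 1 ∧ ∀ i' : Fin m, i' ≠ i → M i' j = 0)) :
    ∀ (x : (Fin k → ℤ) ⧸ Submodule.span ℤ (Set.range M)) (c : ℤ),
      c ≠ 0 → c • x = 0 → x = 0 := by
  classical
  have hrows' (i : Fin m) :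
      M i = 0 ∨ (∃ j j', M i = Pi.single j 1 - Pi.single j' 1) ∨ HasPivot M i := by
    rcases hrows i with h0 | ⟨j, j', hne, hj, hj', hzero⟩ | h3
    · exact .inl h0
    · exact .inr (.inl ⟨j, j', eq_single_sub_single hne hj hj' hzero⟩)
    · exact .inr (.inr h3)
  have hsat : (span ℤ (Set.range M)).IsSaturated := by
    rw [span_range_eq_sup M hrows']
    exact (isSaturated_span_singleSubSingle _).sup_span_range_of_pivots _ (fun a => a.2.col)
      (fun a => a.2.apply_col) (fun a _ hba => a.2.apply_col_of_ne (Subtype.coe_ne_coe.mpr hba))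
      (fun a _ hd => apply_col_eq_zero_of_mem_span M a.2 hd)
  have := hsat.isTorsionFree_quotient
  exact fun x c hc hcx => (smul_eq_zero_iff_right hc).mp hcx
end

section
/- Let F be the free group on a finite set X. The quotient [F,F]/[F,[F,F]] is a free abelian group, and the cosets of the commutators [x, y] for x, y ∈ X with x < y (for any fixed linear order on X) form a basis; in particular its rank is C(|X|, 2). -/
/-!
In `Q = F ⧸ γ₃ F` every commutator is central, so the commutator map of `Q` is bimultiplicative
and the image of `[F, F]` in `Q` is an abelian group generated by the classes of `[x, y]`,
`x < y`. These classes are independent: the Heisenberg group of the bilinear map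
`(a, c) ↦ (a x * c y)_{x < y}` on `ℤ^X` has class two, so the homomorphism sending each generator
`x` to `(e_x, 0)` factors through `Q`, and it sends `[x, y]` to the central element
`(0, e_{(x, y)})`. Reading off the central coordinate thus identifies the image of `[F, F]` with
`ℤ^{x < y}`, a free abelian group of rank `C(|X|, 2)`.
-/

open scoped commutatorElement IsMulCommutative

open Subgroup

section CentralCommutators

variable {G : Type*} [Group G]

theorem commutatorElement_mul_left_of_mem_center {a b c : G} (h : ⁅b, c⁆ ∈ center G) :
    ⁅a * b, c⁆ = ⁅a, c⁆ * ⁅b, c⁆ := by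
  rw [commutatorElement_mul_left_eq_conj_mul, mem_center_iff.mp h a, mul_inv_cancel_right,
    mem_center_iff.mp h]

theorem commutatorElement_mul_right_of_mem_center {a b c : G} (h : ⁅a, c⁆ ∈ center G) :
    ⁅a, b * c⁆ = ⁅a, b⁆ * ⁅a, c⁆ := by
  rw [commutatorElement_mul_right_eq_mul_conj, mul_assoc ⁅a, b⁆ b, mem_center_iff.mp h b,
    ← mul_assoc, mul_inv_cancel_right]

theorem commutatorElement_inv_left_of_mem_center {a b : G} (h : ⁅b, a⁆ ∈ center G) :
    ⁅a⁻¹, b⁆ = ⁅a, b⁆⁻¹ := by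
  rw [commutatorElement_inv_left, mem_center_iff.mp h, inv_mul_cancel_right,
    commutatorElement_inv]

theorem commutatorElement_inv_right_of_mem_center {a b : G} (h : ⁅b, a⁆ ∈ center G) :
    ⁅a, b⁻¹⁆ = ⁅a, b⁆⁻¹ := by
  rw [commutatorElement_inv_right, mem_center_iff.mp h, inv_mul_cancel_right,
    commutatorElement_inv]

theorem commutatorElement_mem_closure_image2 (hG : ∀ a b : G, ⁅a, b⁆ ∈ center G) {s : Set G}
    {a b : G} (ha : a ∈ closure s) (hb : b ∈ closure s) :
    ⁅a, b⁆ ∈ closure (Set.image2 (⁅·, ·⁆) s s) := by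
  set K := closure (Set.image2 (⁅·, ·⁆) s s)
  have h_gen : ∀ x ∈ s, ⁅x, b⁆ ∈ K := by
    intro x hx
    induction hb using closure_induction with
    | mem y hy => exact subset_closure (Set.mem_image2_of_mem hx hy)
    | one => rw [commutatorElement_one_right]; exact one_mem K
    | mul y z _ _ hy hz =>
      rw [commutatorElement_mul_right_of_mem_center (hG x z)]; exact mul_mem hy hz
    | inv y _ hy => rw [commutatorElement_inv_right_of_mem_center (hG y x)]; exact inv_mem hy
  induction ha using closure_induction with
  | mem x hx => exact h_gen x hx
  | one => rw [commutatorElement_one_left]; exact one_mem K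
  | mul x y _ _ hx hy =>
    rw [commutatorElement_mul_left_of_mem_center (hG y b)]; exact mul_mem hx hy
  | inv x _ hx => rw [commutatorElement_inv_left_of_mem_center (hG b x)]; exact inv_mem hx

theorem lowerCentralSeries_two_le_ker {H : Type*} [Group H] (hH : ∀ a b : H, ⁅a, b⁆ ∈ center H)
    (f : G →* H) : (⊤ : Subgroup G).lowerCentralSeries 2 ≤ f.ker := by
  have h_center : (⊤ : Subgroup G).lowerCentralSeries 1 ≤ (center H).comap f := by
    rw [Subgroup.lowerCentralSeries_succ, Subgroup.lowerCentralSeries_zero, commutator_le]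
    intro a _ b _
    rw [mem_comap, map_commutatorElement]
    exact hH _ _
  rw [Subgroup.lowerCentralSeries_succ, commutator_le]
  intro a ha b _
  rw [MonoidHom.mem_ker, map_commutatorElement, commutatorElement_eq_one_iff_mul_comm]
  exact (mem_center_iff.mp (h_center ha) (f b)).symm

end CentralCommutators

section LowerCentralQuotient

variable {G : Type*} [Group G]

theorem commutatorElement_mem_center_quotient_lowerCentralSeries_two
    (a b : G ⧸ (⊤ : Subgroup G).lowerCentralSeries 2) : ⁅a, b⁆ ∈ center _ := by
  induction a using QuotientGroup.induction_on with | H g =>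
  induction b using QuotientGroup.induction_on with | H h =>
  refine mem_center_iff.mpr fun c => ?_
  induction c using QuotientGroup.induction_on with | H k =>
  rw [eq_comm, ← commutatorElement_eq_one_iff_mul_comm]
  simp only [← QuotientGroup.mk'_apply, ← map_commutatorElement]
  exact (QuotientGroup.eq_one_iff _).mpr
    (commutator_mem_commutator (commutator_mem_commutator (mem_top g) (mem_top h)) (mem_top k))

theorem map_lowerCentralSeries_one_le_center :
    ((⊤ : Subgroup G).lowerCentralSeries 1).map
      (QuotientGroup.mk' ((⊤ : Subgroup G).lowerCentralSeries 2)) ≤ center _ := by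
  rw [top_lowerCentralSeries_one, _root_.commutator_def, map_commutator, commutator_le]
  exact fun a _ b _ => commutatorElement_mem_center_quotient_lowerCentralSeries_two a b

-- Through `open scoped IsMulCommutative`, this makes `Additive` of the image a `ℤ`-module.
instance : IsMulCommutative (((⊤ : Subgroup G).lowerCentralSeries 1).map
    (QuotientGroup.mk' ((⊤ : Subgroup G).lowerCentralSeries 2))) :=
  ⟨⟨fun a b => Subtype.ext (mem_center_iff.mp (map_lowerCentralSeries_one_le_center b.2) a)⟩⟩

theorem map_lowerCentralSeries_one_eq_closure {s : Set G} (hs : closure s = ⊤) :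
    ((⊤ : Subgroup G).lowerCentralSeries 1).map
        (QuotientGroup.mk' ((⊤ : Subgroup G).lowerCentralSeries 2)) =
      Subgroup.closure (Set.image2 (⁅·, ·⁆)
        (QuotientGroup.mk' ((⊤ : Subgroup G).lowerCentralSeries 2) '' s)
        (QuotientGroup.mk' ((⊤ : Subgroup G).lowerCentralSeries 2) '' s)) := by
  set π := QuotientGroup.mk' ((⊤ : Subgroup G).lowerCentralSeries 2)
  have h_gen : closure (π '' s) = ⊤ := by
    rw [← MonoidHom.map_closure, hs, ← MonoidHom.range_eq_map, MonoidHom.range_eq_top]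
    exact QuotientGroup.mk'_surjective _
  apply le_antisymm
  · rw [top_lowerCentralSeries_one, _root_.commutator_def, map_commutator, commutator_le]
    intro a _ b _
    exact commutatorElement_mem_closure_image2
      commutatorElement_mem_center_quotient_lowerCentralSeries_two
      (h_gen ▸ mem_top a) (h_gen ▸ mem_top b)
  · rw [closure_le]
    rintro _ ⟨_, ⟨x, -, rfl⟩, _, ⟨y, -, rfl⟩, rfl⟩
    exact ⟨⁅x, y⁆, commutator_mem_commutator (mem_top x) (mem_top y), map_commutatorElement _ _ _⟩

end LowerCentralQuotient

@[ext]
structure HeisenbergGroup {A B : Type*} [AddCommGroup A] [AddCommGroup B] (β : A →+ A →+ B) where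
  fst : A
  snd : B

namespace HeisenbergGroup

variable {A B : Type*} [AddCommGroup A] [AddCommGroup B] {β : A →+ A →+ B}

instance : Mul (HeisenbergGroup β) :=
  ⟨fun g h => ⟨g.fst + h.fst, g.snd + h.snd + β g.fst h.fst⟩⟩
instance : One (HeisenbergGroup β) := ⟨⟨0, 0⟩⟩
instance : Inv (HeisenbergGroup β) := ⟨fun g => ⟨-g.fst, -g.snd + β g.fst g.fst⟩⟩

@[simp] theorem mul_fst (g h : HeisenbergGroup β) : (g * h).fst = g.fst + h.fst := rfl
@[simp] theorem mul_snd (g h : HeisenbergGroup β) :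
    (g * h).snd = g.snd + h.snd + β g.fst h.fst := rfl
@[simp] theorem one_fst : (1 : HeisenbergGroup β).fst = 0 := rfl
@[simp] theorem one_snd : (1 : HeisenbergGroup β).snd = 0 := rfl
@[simp] theorem inv_fst (g : HeisenbergGroup β) : g⁻¹.fst = -g.fst := rfl
@[simp] theorem inv_snd (g : HeisenbergGroup β) : g⁻¹.snd = -g.snd + β g.fst g.fst := rfl

instance : Group (HeisenbergGroup β) where
  mul_assoc g h k := by ext <;> simp <;> abel
  one_mul g := by ext <;> simp
  mul_one g := by ext <;> simp
  inv_mul_cancel g := by ext <;> simp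

theorem commutatorElement_eq (g h : HeisenbergGroup β) :
    ⁅g, h⁆ = ⟨0, β g.fst h.fst - β h.fst g.fst⟩ := by
  ext <;> simp [commutatorElement_def]
  abel

theorem commutatorElement_mem_center (g h : HeisenbergGroup β) : ⁅g, h⁆ ∈ center _ := by
  refine mem_center_iff.mpr fun k => ?_
  ext <;> simp [commutatorElement_eq]
  abel

def fstHom : HeisenbergGroup β →* Multiplicative A where
  toFun g := Multiplicative.ofAdd g.fst
  map_one' := rfl
  map_mul' _ _ := rfl

theorem fst_eq_zero_of_mem_commutator {G : Type*} [Group G] (f : G →* HeisenbergGroup β) {g : G}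
    (hg : g ∈ commutator G) : (f g).fst = 0 :=
  congrArg Multiplicative.toAdd (Abelianization.commutator_subset_ker (fstHom.comp f) hg)

end HeisenbergGroup

abbrev IncreasingPair (X : Type*) [LT X] := {p : X × X // p.1 < p.2}

def strictUpperOuterProduct (X : Type*) [LT X] :
    (X → ℤ) →+ (X → ℤ) →+ (IncreasingPair X → ℤ) :=
  AddMonoidHom.mk' (fun a => AddMonoidHom.mk' (fun c q => a q.1.1 * c q.1.2)
    fun c c' => by ext q; simp [mul_add])
    fun a a' => by ext c q; simp [add_mul]

namespace FreeGroup

variable (X : Type*)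

abbrev ClassTwoQuotient := FreeGroup X ⧸ (⊤ : Subgroup (FreeGroup X)).lowerCentralSeries 2

abbrev classTwoCommutator : Subgroup (ClassTwoQuotient X) :=
  ((⊤ : Subgroup (FreeGroup X)).lowerCentralSeries 1).map
    (QuotientGroup.mk' ((⊤ : Subgroup (FreeGroup X)).lowerCentralSeries 2))

variable [LinearOrder X]

noncomputable def commutatorClass (p : IncreasingPair X) : ClassTwoQuotient X :=
  QuotientGroup.mk ⁅of p.1.1, of p.1.2⁆

theorem map_lowerCentralSeries_one_eq_closure_commutatorClass :
    classTwoCommutator X = Subgroup.closure (Set.range (commutatorClass X)) := by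
  rw [classTwoCommutator, map_lowerCentralSeries_one_eq_closure (closure_range_of X)]
  apply le_antisymm
  · rw [closure_le]
    rintro _ ⟨_, ⟨_, ⟨x, rfl⟩, rfl⟩, _, ⟨_, ⟨y, rfl⟩, rfl⟩, rfl⟩
    dsimp only
    rcases lt_trichotomy x y with hxy | rfl | hyx
    · exact subset_closure ⟨⟨(x, y), hxy⟩, map_commutatorElement (QuotientGroup.mk' _) _ _⟩
    · rw [commutatorElement_self]
      exact one_mem _
    · rw [← commutatorElement_inv]
      exact inv_mem
        (subset_closure ⟨⟨(y, x), hyx⟩, map_commutatorElement (QuotientGroup.mk' _) _ _⟩)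
  · refine closure_mono ?_
    rintro _ ⟨p, rfl⟩
    exact ⟨_, ⟨_, ⟨p.1.1, rfl⟩, rfl⟩, _, ⟨_, ⟨p.1.2, rfl⟩, rfl⟩, rfl⟩

theorem commutatorClass_mem (p : IncreasingPair X) :
    commutatorClass X p ∈ classTwoCommutator X := by
  rw [map_lowerCentralSeries_one_eq_closure_commutatorClass]
  exact subset_closure ⟨p, rfl⟩

variable {X}

noncomputable def toHeisenberg : FreeGroup X →* HeisenbergGroup (strictUpperOuterProduct X) :=
  FreeGroup.lift fun x => ⟨Pi.single x 1, 0⟩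

theorem toHeisenberg_commutatorElement_of {x y : X} (h : x < y) :
    toHeisenberg ⁅of x, of y⁆ = ⟨0, Pi.single ⟨(x, y), h⟩ 1⟩ := by
  rw [map_commutatorElement, toHeisenberg, lift_apply_of, lift_apply_of,
    HeisenbergGroup.commutatorElement_eq]
  congr 1
  ext ⟨⟨u, v⟩, huv⟩
  have h_swap : ¬(u = y ∧ v = x) := by
    rintro ⟨rfl, rfl⟩
    exact lt_asymm h huv
  simp [strictUpperOuterProduct, Pi.single_apply]
  split_ifs <;> simp_all

noncomputable def quotientToHeisenberg :
    ClassTwoQuotient X →* HeisenbergGroup (strictUpperOuterProduct X) :=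
  QuotientGroup.lift _ toHeisenberg
    (lowerCentralSeries_two_le_ker HeisenbergGroup.commutatorElement_mem_center toHeisenberg)

theorem quotientToHeisenberg_fst_eq_zero {q : ClassTwoQuotient X}
    (hq : q ∈ classTwoCommutator X) : (quotientToHeisenberg q).fst = 0 := by
  obtain ⟨g, hg, rfl⟩ := hq
  rw [top_lowerCentralSeries_one] at hg
  exact HeisenbergGroup.fst_eq_zero_of_mem_commutator toHeisenberg hg

variable (X)

noncomputable def commutatorCoord : Additive (classTwoCommutator X) →+ (IncreasingPair X → ℤ) :=
  AddMonoidHom.mk' (fun m => (quotientToHeisenberg (Additive.toMul m : classTwoCommutator X)).snd)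
    fun m n => by simp [quotientToHeisenberg_fst_eq_zero (Additive.toMul m).2]

noncomputable def commutatorVector (p : IncreasingPair X) : Additive (classTwoCommutator X) :=
  Additive.ofMul ⟨commutatorClass X p, commutatorClass_mem X p⟩

theorem commutatorCoord_commutatorVector (p : IncreasingPair X) :
    commutatorCoord X (commutatorVector X p) = Pi.single p 1 := by
  show (toHeisenberg ⁅of p.1.1, of p.1.2⁆).snd = _
  rw [toHeisenberg_commutatorElement_of p.2]

theorem linearIndependent_commutatorVector : LinearIndependent ℤ (commutatorVector X) := by
  refine LinearIndependent.of_comp (commutatorCoord X).toIntLinearMap ?_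
  have h_comp : ⇑(commutatorCoord X).toIntLinearMap ∘ commutatorVector X =
      fun p => Pi.single p 1 :=
    funext (commutatorCoord_commutatorVector X)
  rw [h_comp]
  exact Pi.linearIndependent_single_one _ ℤ

theorem span_commutatorVector : ⊤ ≤ Submodule.span ℤ (Set.range (commutatorVector X)) := by
  suffices h : ∀ (q : ClassTwoQuotient X) (hq : q ∈ classTwoCommutator X),
      Additive.ofMul ⟨q, hq⟩ ∈ Submodule.span ℤ (Set.range (commutatorVector X)) from
    fun m _ => h _ (Additive.toMul m).2
  have h_eq := map_lowerCentralSeries_one_eq_closure_commutatorClass X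
  intro q hq
  induction h_eq.le hq using closure_induction with
  | mem _ hx => obtain ⟨p, rfl⟩ := hx; exact Submodule.subset_span ⟨p, rfl⟩
  | one => exact zero_mem _
  | mul x y hx hy ihx ihy => exact add_mem (ihx (h_eq.ge hx)) (ihy (h_eq.ge hy))
  | inv x hx ih => exact neg_mem (ih (h_eq.ge hx))

noncomputable def commutatorBasis :
    Module.Basis (IncreasingPair X) ℤ (Additive (classTwoCommutator X)) :=
  .mk (linearIndependent_commutatorVector X) (span_commutatorVector X)

theorem commutatorBasis_apply (p : IncreasingPair X) :
    commutatorBasis X p = commutatorVector X p :=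
  Module.Basis.mk_apply _ _ p

end FreeGroup

/-- For the free group `F` on a finite linearly ordered set `X`, the quotient
`[F,F]/[F,[F,F]]` (realized as the image of `[F,F] = lowerCentralSeries F 1` in
`F / lowerCentralSeries F 2`) is free abelian with basis the classes of the commutators
`[x,y]` for `x < y`; in particular its rank is `C(|X|,2)`. -/
theorem stmt14 (X : Type) [Fintype X] [LinearOrder X] :
    (∃ e : Multiplicative ({p : X × X // p.1 < p.2} → ℤ) ≃*
        ((Subgroup.lowerCentralSeries (⊤ : Subgroup (FreeGroup X)) 1).map
          (QuotientGroup.mk' (Subgroup.lowerCentralSeries (⊤ : Subgroup (FreeGroup X)) 2))),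
      ∀ (x y : X) (h : x < y),
        ((e (Multiplicative.ofAdd (Pi.single (⟨(x, y), h⟩ : {p : X × X // p.1 < p.2}) 1)) :
            ((Subgroup.lowerCentralSeries (⊤ : Subgroup (FreeGroup X)) 1).map
              (QuotientGroup.mk' (Subgroup.lowerCentralSeries (⊤ : Subgroup (FreeGroup X)) 2)))) :
            FreeGroup X ⧸ Subgroup.lowerCentralSeries (⊤ : Subgroup (FreeGroup X)) 2)
          = QuotientGroup.mk ⁅FreeGroup.of x, FreeGroup.of y⁆) ∧
    Nat.card {p : X × X // p.1 < p.2} = (Fintype.card X).choose 2 := by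
  refine ⟨⟨AddEquiv.toMultiplicativeLeft (FreeGroup.commutatorBasis X).equivFun.symm.toAddEquiv,
    fun x y h => ?_⟩, ?_⟩
  · have h_basis : (FreeGroup.commutatorBasis X).equivFun.symm (Pi.single ⟨(x, y), h⟩ 1) =
        FreeGroup.commutatorVector X ⟨(x, y), h⟩ := by
      rw [Basis.equivFun_symm_single, FreeGroup.commutatorBasis_apply]
    exact congrArg (fun v => (Additive.toMul v).val) h_basis
  · rw [Nat.card_eq_fintype_card, Fintype.card_subtype, Fintype.card_product_filter_lt]
end
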